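/- arXiv:1411.5874 — 5 statements merged into one kernel-verified Lean document; each statement's English description precedes it below -/
import Mathlib

section
/- Consider the finite graph R on six vertices x, y, z, a, u, v with edge set {(x,y),(y,z),(z,x),(a,u),(u,v),(v,a),(x,u),(y,v),(z,a)}. For every proper 3-coloring ν of R: if ν(a) = ν(x) then ν(u) = ν(y), and if ν(a) = ν(y) then ν(u) = ν(z). -/
/-- The vertices of the prism widget R. -/
inductive WidgetR : Type
  | x | y | z | a | u | v
  deriving DecidableEq

/-- ν is a proper 3-coloring of the prism widget: two triangles {x,y,z} and
{a,u,v} joined by the perfect matching x–u, y–v, z–a. -/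
def WidgetR.Proper (ν : WidgetR → Fin 3) : Prop :=
  ν .x ≠ ν .y ∧ ν .y ≠ ν .z ∧ ν .z ≠ ν .x ∧
  ν .a ≠ ν .u ∧ ν .u ≠ ν .v ∧ ν .v ≠ ν .a ∧
  ν .x ≠ ν .u ∧ ν .y ≠ ν .v ∧ ν .z ≠ ν .a

theorem Fin.eq_of_ne_of_ne_of_pairwise_ne {a b c d : Fin 3} (hab : a ≠ b) (hbc : b ≠ c)
    (hca : c ≠ a) (hda : d ≠ a) (hdb : d ≠ b) : d = c := by
  omega

/-- In every proper 3-coloring of the prism widget R: if a is colored like x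
then u is colored like y, and if a is colored like y then u is colored like z. -/
theorem stmt_7 (ν : WidgetR → Fin 3) (hν : WidgetR.Proper ν) :
    (ν .a = ν .x → ν .u = ν .y) ∧ (ν .a = ν .y → ν .u = ν .z) := by
  obtain ⟨hxy, hyz, hzx, hau, huv, hva, hxu, hyv, -⟩ := hν
  constructor
  · intro hax
    have hvz : ν .v = ν .z :=
      Fin.eq_of_ne_of_ne_of_pairwise_ne hxy hyz hzx (hax ▸ hva) hyv.symm
    exact Fin.eq_of_ne_of_ne_of_pairwise_ne hzx hxy hyz (hvz ▸ huv) hxu.symm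
  · intro hay
    exact Fin.eq_of_ne_of_ne_of_pairwise_ne hxy hyz hzx hxu.symm (hay ▸ hau.symm)
end

section
/- Consider the finite graph R on six vertices x, y, z, a, u, v with edge set {(x,y),(y,z),(z,x),(a,u),(u,v),(v,a),(x,u),(y,v),(z,a)}. (1) Every proper 3-coloring of the subgraph induced by {x,y,z,a} (note a is adjacent to z only among these) extends to a proper 3-coloring of R. (2) In every proper 3-coloring ν of R: if ν(u) = ν(y) or ν(v) = ν(z) then ν(a) = ν(x), and if ν(u) = ν(z) or ν(v) = ν(x) then ν(a) = ν(y). -/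
/-! With only three colors, a vertex of R adjacent to two differently colored vertices has its
color forced, so the triangle `x y z` determines the triangle `a u v` up to the choice of the
color of `a`, and `a` can only take the color of `x` or of `y`. In the first case the matching
forces `(a, u, v) ↦ (x, y, z)`, in the second `(a, u, v) ↦ (y, z, x)`. -/

theorem eq_of_ne_of_ne_of_card_eq_three {α : Type*} [Fintype α]
    (hα : Fintype.card α = 3) {p q r d : α} (hpq : p ≠ q) (hqr : q ≠ r) (hrp : r ≠ p)
    (hdp : d ≠ p) (hdq : d ≠ q) : d = r := by
  classical
  by_contra hdr
  have hcard : ({d, p, q, r} : Finset α).card = 4 := by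
    rw [Finset.card_insert_of_notMem (by simp [hdp, hdq, hdr]),
      Finset.card_insert_of_notMem (by simp [hpq, hrp.symm]),
      Finset.card_pair hqr]
  have := Finset.card_le_univ ({d, p, q, r} : Finset α)
  omega

theorem Fin.three_eq_of_ne_of_ne {p q r d : Fin 3} (hpq : p ≠ q) (hqr : q ≠ r) (hrp : r ≠ p)
    (hdp : d ≠ p) (hdq : d ≠ q) : d = r :=
  eq_of_ne_of_ne_of_card_eq_three (Fintype.card_fin 3) hpq hqr hrp hdp hdq

namespace WidgetR

def coloring (cx cy cz ca cu cv : Fin 3) : WidgetR → Fin 3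
  | .x => cx | .y => cy | .z => cz | .a => ca | .u => cu | .v => cv

theorem Proper.cases {ν : WidgetR → Fin 3} (hν : Proper ν) :
    (ν .a = ν .x ∧ ν .u = ν .y ∧ ν .v = ν .z) ∨ (ν .a = ν .y ∧ ν .u = ν .z ∧ ν .v = ν .x) := by
  obtain ⟨hxy, hyz, hzx, hau, huv, hva, hxu, hyv, hza⟩ := hν
  by_cases hax : ν .a = ν .x
  · have hvz : ν .v = ν .z := Fin.three_eq_of_ne_of_ne hxy.symm hzx.symm hyz.symm
      hyv.symm (hax ▸ hva)
    have huy : ν .u = ν .y := Fin.three_eq_of_ne_of_ne hzx hxy hyz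
      (hvz ▸ huv) hxu.symm
    exact Or.inl ⟨hax, huy, hvz⟩
  · have hay : ν .a = ν .y := Fin.three_eq_of_ne_of_ne hzx hxy hyz hza.symm hax
    have huz : ν .u = ν .z := Fin.three_eq_of_ne_of_ne hxy hyz hzx hxu.symm (hay ▸ hau.symm)
    have hvx : ν .v = ν .x := Fin.three_eq_of_ne_of_ne hyz hzx hxy hyv.symm (huz ▸ huv.symm)
    exact Or.inr ⟨hay, huz, hvx⟩

theorem exists_proper_extension {cx cy cz ca : Fin 3} (hxy : cx ≠ cy) (hyz : cy ≠ cz)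
    (hzx : cz ≠ cx) (hza : cz ≠ ca) :
    ∃ ν : WidgetR → Fin 3, Proper ν ∧ ν .x = cx ∧ ν .y = cy ∧ ν .z = cz ∧ ν .a = ca := by
  by_cases hax : ca = cx
  · subst hax
    exact ⟨coloring ca cy cz ca cy cz,
      ⟨hxy, hyz, hzx, hxy, hyz, hzx, hxy, hyz, hzx⟩, rfl, rfl, rfl, rfl⟩
  · obtain rfl : ca = cy := Fin.three_eq_of_ne_of_ne hzx hxy hyz hza.symm hax
    exact ⟨coloring cx ca cz ca cz cx,
      ⟨hxy, hyz, hzx, hyz, hzx, hxy, hzx.symm, hxy.symm, hyz.symm⟩, rfl, rfl, rfl, rfl⟩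

end WidgetR

/-- (1) Every proper 3-coloring of the subgraph of R induced by {x,y,z,a}
extends to a proper 3-coloring of R.  (2) In every proper 3-coloring ν of R,
the color of u (resp. v) determines the color of a: if ν u = ν y or ν v = ν z
then ν a = ν x, and if ν u = ν z or ν v = ν x then ν a = ν y. -/
theorem stmt_8 :
    (∀ cx cy cz ca : Fin 3, cx ≠ cy → cy ≠ cz → cz ≠ cx → cz ≠ ca →
      ∃ ν : WidgetR → Fin 3, WidgetR.Proper ν ∧
        ν .x = cx ∧ ν .y = cy ∧ ν .z = cz ∧ ν .a = ca) ∧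
    (∀ ν : WidgetR → Fin 3, WidgetR.Proper ν →
      ((ν .u = ν .y ∨ ν .v = ν .z) → ν .a = ν .x) ∧
      ((ν .u = ν .z ∨ ν .v = ν .x) → ν .a = ν .y)) := by
  refine ⟨fun _ _ _ _ => WidgetR.exists_proper_extension, fun ν hν => ?_⟩
  have hcases := hν.cases
  obtain ⟨hxy, hyz, hzx, -⟩ := hν
  rcases hcases with ⟨hax, huy, hvz⟩ | ⟨hay, huz, hvx⟩
  · refine ⟨fun _ => hax, ?_⟩
    rintro (huz | hvx)
    exacts [absurd (huy.symm.trans huz) hyz, absurd (hvz.symm.trans hvx) hzx]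
  · refine ⟨?_, fun _ => hay⟩
    rintro (huy | hvz)
    exacts [absurd (huz.symm.trans huy) hyz.symm, absurd (hvx.symm.trans hvz) hzx.symm]
end

section
/- Let T ⊆ 2^{<ℕ} be an infinite tree with strings of every length, and fix a countable set of atoms {a_i : i ∈ ℕ}. To each binary string σ associate the clause θ_σ = ⋁_{i<|σ|} ℓ_i where ℓ_i = a_i if σ(i) = 0 and ℓ_i = ¬a_i if σ(i) = 1. Then the set of clauses C = {θ_σ : σ ∉ T} is finitely satisfiable: for every n, the truth assignment t(a_i) := τ(i) obtained from any τ ∈ T of length n satisfies every clause θ_σ with σ ∉ T and |σ| ≤ n. -/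
theorem List.prefix_of_forall_getElem?_eq {α : Type*} {l₁ l₂ : List α}
    (h : ∀ i < l₁.length, l₁[i]? = l₂[i]?) : l₁ <+: l₂ :=
  List.prefix_iff_getElem?.2 fun i hi => by rw [← h i hi, List.getElem?_eq_getElem hi]

theorem stmt_11_general (T : Set (List Bool))
    (htree : ∀ σ ∈ T, ∀ τ : List Bool, τ <+: σ → τ ∈ T)
    (n : ℕ) (τ : List Bool) (hτ : τ ∈ T) :
    ∀ σ : List Bool, σ ∉ T → σ.length ≤ n →
      ∃ i < σ.length, σ[i]? ≠ τ[i]? := by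
  intro σ hσ _
  by_contra! hagree
  exact hσ (htree τ hτ σ (List.prefix_of_forall_getElem?_eq hagree))

/-- Let T be a tree with strings of every length.  For any τ ∈ T of length n,
the truth assignment t(a_i) := τ(i) satisfies every clause θ_σ for σ ∉ T with
|σ| ≤ n; i.e., for every such σ there is i < |σ| with σ(i) ≠ τ(i). -/
theorem stmt_11 (T : Set (List Bool))
    (htree : ∀ σ ∈ T, ∀ τ : List Bool, τ <+: σ → τ ∈ T)
    (hT : ∀ n : ℕ, ∃ σ ∈ T, σ.length = n)
    (n : ℕ) (τ : List Bool) (hτ : τ ∈ T) (hlen : τ.length = n) :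
    ∀ σ : List Bool, σ ∉ T → σ.length ≤ n →
      ∃ i < σ.length, σ[i]? ≠ τ[i]? :=
  stmt_11_general T htree n τ hτ
end

section
/- Let T ⊆ 2^{<ℕ} be an infinite tree and let X ⊆ ℕ be infinite, with increasing enumeration (x_i). Define S = {σ ∈ 2^{<ℕ} : ∃τ ∈ T with |τ| = x_{|σ|} and σ(i) = τ(x_i) for all i < |σ|}. Then S is an infinite tree (closed under prefixes and containing strings of every length). Moreover, if H₀ ⊆ ℕ is infinite and homogeneous for S with color c, then H = {x_i : i ∈ H₀} is an infinite subset of X that is homogeneous for T with color c. -/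
/-- The tree S obtained from T by restricting attention to the positions
enumerated by x. -/
def pullTree (T : Set (List Bool)) (x : ℕ → ℕ) : Set (List Bool) :=
  {σ | ∃ τ ∈ T, τ.length = x σ.length ∧
    ∀ i : ℕ, i < σ.length → σ[i]? = τ[x i]?}

/-- A ⊆ ℕ is homogeneous for a tree T with color c: infinitely many σ ∈ T
satisfy σ(n) = c for all n ∈ A below |σ|. -/
def HomFor (T : Set (List Bool)) (A : Set ℕ) (c : Bool) : Prop :=
  {σ ∈ T | ∀ n ∈ A, n < σ.length → σ[n]? = some c}.Infinite

/-!
A string of `S` of length `n` is the trace of a string `τ ∈ T` of length `x n` on the positions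
`x 0 < x 1 < ⋯`. Since there are only finitely many binary strings of each length, a set of
strings is infinite iff their lengths are unbounded; as `|τ| = x |σ| ≥ |σ|`, the witnesses `τ` of
unboundedly long `c`-homogeneous strings of `S` for `H₀` are unboundedly long `c`-homogeneous
strings of `T` for `x '' H₀`.
-/

theorem Set.infinite_iff_forall_exists_le_length {α : Type*} [Finite α] {S : Set (List α)} :
    S.Infinite ↔ ∀ n, ∃ l ∈ S, n ≤ l.length := by
  constructor
  · intro hS n
    by_contra! hshort
    exact hS ((List.finite_length_le α n).subset fun l hl => (hshort l hl).le)
  · intro hlong hfin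
    obtain ⟨N, hN⟩ := (hfin.image List.length).bddAbove
    obtain ⟨l, hl, hle⟩ := hlong (N + 1)
    have := hN ⟨l, hl, rfl⟩
    omega

def IsPrefixClosed (T : Set (List Bool)) : Prop :=
  ∀ σ ∈ T, ∀ τ : List Bool, τ <+: σ → τ ∈ T

namespace IsPrefixClosed

variable {T : Set (List Bool)}

theorem exists_length_eq (hT : IsPrefixClosed T) (hinf : T.Infinite) (n : ℕ) :
    ∃ τ ∈ T, τ.length = n := by
  obtain ⟨τ, hτ, hn⟩ := Set.infinite_iff_forall_exists_le_length.mp hinf n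
  exact ⟨τ.take n, hT τ hτ _ (List.take_prefix n τ), List.length_take_of_le hn⟩

theorem pullTree {x : ℕ → ℕ} (hT : IsPrefixClosed T) (hx : StrictMono x) :
    IsPrefixClosed (pullTree T x) := by
  rintro σ ⟨τ, hτ, hlen, hget⟩ ρ ⟨r, rfl⟩
  have hρ : ρ.length ≤ (ρ ++ r).length := by simp
  refine ⟨τ.take (x ρ.length), hT τ hτ _ (List.take_prefix _ _), ?_, fun i hi => ?_⟩
  · exact List.length_take_of_le (hlen ▸ hx.monotone hρ)
  · rw [List.getElem?_take_of_lt (hx hi), ← hget i (hi.trans_le hρ),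
      List.getElem?_append_left hi]

end IsPrefixClosed

section pullTree

variable {T : Set (List Bool)} {x : ℕ → ℕ}

theorem exists_mem_pullTree_length_eq {τ : List Bool} (hτ : τ ∈ T) {n : ℕ}
    (hlen : τ.length = x n) (hx : StrictMono x) : ∃ σ ∈ pullTree T x, σ.length = n := by
  refine ⟨(List.range n).map fun i => τ.getD (x i) false, ⟨τ, hτ, by simpa, fun i hi => ?_⟩,
    by simp⟩
  have hi : i < n := by simpa using hi
  simp [List.getElem?_range hi, List.getElem?_eq_getElem (hlen ▸ hx hi : x i < τ.length)]

theorem HomFor.image_of_pullTree (hx : StrictMono x) {H₀ : Set ℕ} {c : Bool}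
    (hH₀ : HomFor (pullTree T x) H₀ c) : HomFor T (x '' H₀) c := by
  refine Set.infinite_iff_forall_exists_le_length.mpr fun n => ?_
  obtain ⟨σ, ⟨⟨τ, hτ, hlen, hget⟩, hσc⟩, hn⟩ :=
    Set.infinite_iff_forall_exists_le_length.mp hH₀ n
  refine ⟨τ, ⟨hτ, ?_⟩, hlen ▸ hn.trans hx.le_apply⟩
  rintro _ ⟨k, hk, rfl⟩ hkτ
  have hkσ : k < σ.length := hx.lt_iff_lt.mp (hlen ▸ hkτ)
  rw [← hget k hkσ]
  exact hσc k hk hkσ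

end pullTree

/-- Localization of RWKL: if T is an infinite tree and x is the increasing
enumeration of an infinite set X ⊆ ℕ, then S = pullTree T x is an infinite
tree, and for any infinite H₀ homogeneous for S with color c, the image
H = x '' H₀ is an infinite subset of X homogeneous for T with color c. -/
theorem stmt_14 (T : Set (List Bool))
    (htree : ∀ σ ∈ T, ∀ τ : List Bool, τ <+: σ → τ ∈ T)
    (hT : T.Infinite) (x : ℕ → ℕ) (hx : StrictMono x) :
    (∀ σ ∈ pullTree T x, ∀ τ : List Bool, τ <+: σ → τ ∈ pullTree T x) ∧
    (∀ n : ℕ, ∃ σ ∈ pullTree T x, σ.length = n) ∧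
    (∀ H₀ : Set ℕ, H₀.Infinite → ∀ c : Bool, HomFor (pullTree T x) H₀ c →
      x '' H₀ ⊆ Set.range x ∧ (x '' H₀).Infinite ∧ HomFor T (x '' H₀) c) := by
  have hpc : IsPrefixClosed T := htree
  refine ⟨hpc.pullTree hx, fun n => ?_, fun H₀ hH₀ c hHom => ?_⟩
  · obtain ⟨τ, hτ, hlen⟩ := hpc.exists_length_eq hT (x n)
    exact exists_mem_pullTree_length_eq hτ hlen hx
  · exact ⟨Set.image_subset_range x H₀, hH₀.image hx.injective.injOn, hHom.image_of_pullTree hx⟩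
end

section
/- Let G be a graph on ℕ with no cycle of odd length, and suppose there are infinitely many pairs (x_n, y_n) of distinct vertices each connected by a walk of odd length in G. Form the graph G' with vertex set containing the x_n, y_n and fresh vertices a_n, b_n for each n, and edges (x_n, a_n), (a_n, b_n), (b_n, y_n). Then G' has no cycle of odd length. -/
/-!
A graph without odd cycles has no closed walk of odd length, hence is 2-colourable. In a
2-colouring of `G` the endpoints `x n`, `y n` of an odd walk get different colours; colouring
`a n` opposite to `x n` and `b n` like `x n` then properly 2-colours `G'`, and a 2-colourable
graph has no odd closed walk.
-/

/-- The relation generating the graph G': for each n, edges (x_n, a_n),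
(a_n, b_n), (b_n, y_n), where a_n = inr (n, false) and b_n = inr (n, true). -/
def linkRel (x y : ℕ → ℕ) : (ℕ ⊕ ℕ × Bool) → (ℕ ⊕ ℕ × Bool) → Prop
  | Sum.inl u, Sum.inr (n, false) => u = x n
  | Sum.inr (n, false), Sum.inr (m, true) => n = m
  | Sum.inr (n, true), Sum.inl u => u = y n
  | _, _ => False

namespace SimpleGraph

variable {V : Type*} {G : SimpleGraph V}

namespace Walk

/-- When the new first vertex `u` already lies on the path `q`, the edge to `u` closes a cycle
with the initial segment of `q`; that cycle is odd unless the segment is odd, in which case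
dropping it keeps the parity. -/
theorem exists_odd_isCycle_or_exists_isPath_even_iff [DecidableEq V] {u v : V}
    (p : G.Walk u v) :
    (∃ (w : V) (c : G.Walk w w), c.IsCycle ∧ Odd c.length) ∨
      ∃ q : G.Walk u v, q.IsPath ∧ (Even q.length ↔ Even p.length) := by
  induction p with
  | nil => exact .inr ⟨nil, .nil, Iff.rfl⟩
  | @cons u w v h p ih =>
    obtain hcycle | ⟨q, hq, hpar⟩ := ih
    · exact .inl hcycle
    by_cases hu : u ∈ q.support
    · have hlen : (q.takeUntil u hu).length + (q.dropUntil u hu).length = q.length := by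
        rw [← length_append, take_spec]
      have htake : (q.takeUntil u hu).IsPath := hq.takeUntil hu
      rcases Nat.even_or_odd (q.takeUntil u hu).length with heven | hodd
      · refine .inl ⟨u, cons h (q.takeUntil u hu), cons_isCycle_iff _ h |>.2 ⟨htake, ?_⟩,
          by simpa [length_cons] using heven.add_one⟩
        intro hmem
        rw [htake.length_eq_one_of_mem_edges (Sym2.eq_swap ▸ hmem)] at heven
        exact Nat.not_even_one heven
      · refine .inr ⟨q.dropUntil u hu, hq.dropUntil hu, ?_⟩
        have := Nat.not_even_iff_odd.2 hodd
        rw [length_cons, Nat.even_add_one, ← hpar, ← hlen, Nat.even_add]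
        tauto
    · refine .inr ⟨cons h q, hq.cons hu, ?_⟩
      simp only [length_cons, Nat.even_add_one, hpar]

end Walk

theorem even_length_of_forall_isCycle_not_odd
    (hodd : ∀ (v : V) (c : G.Walk v v), c.IsCycle → ¬ Odd c.length) {u : V}
    (p : G.Walk u u) : Even p.length := by
  classical
  obtain ⟨w, c, hc, hc_odd⟩ | ⟨q, hq, hpar⟩ := p.exists_odd_isCycle_or_exists_isPath_even_iff
  · exact absurd hc_odd (hodd w c hc)
  · rw [Walk.isPath_iff_nil, ← Walk.length_eq_zero_iff] at hq
    exact hpar.1 (hq ▸ .zero)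

theorem nonempty_coloring_bool_of_forall_isCycle_not_odd
    (hodd : ∀ (v : V) (c : G.Walk v v), c.IsCycle → ¬ Odd c.length) :
    Nonempty (G.Coloring Bool) :=
  have h2 : G.Colorable 2 :=
    two_colorable_iff_forall_loop_even.2 fun _ => even_length_of_forall_isCycle_not_odd hodd
  ⟨G.recolorOfEquiv finTwoEquiv h2.some⟩

theorem Coloring.ne_of_odd_length (c : G.Coloring Bool) {u v : V} (p : G.Walk u v)
    (hp : Odd p.length) : c u ≠ c v := fun hcongr => by
  have := (c.odd_length_iff_not_congr p).1 hp
  rw [hcongr] at this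
  exact not_iff_self this

end SimpleGraph

open SimpleGraph

def linkColor (x : ℕ → ℕ) (c : ℕ → Bool) : ℕ ⊕ ℕ × Bool → Bool
  | Sum.inl u => c u
  | Sum.inr (n, false) => !c (x n)
  | Sum.inr (n, true) => c (x n)

theorem linkColor_ne_of_linkRel {x y : ℕ → ℕ} {c : ℕ → Bool} (hc : ∀ n, c (x n) ≠ c (y n)) :
    ∀ {v w}, linkRel x y v w → linkColor x c v ≠ linkColor x c w
  | Sum.inl _, Sum.inr (n, false), rfl => by simp [linkColor]
  | Sum.inr (n, false), Sum.inr (_, true), rfl => by simp [linkColor]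
  | Sum.inr (n, true), Sum.inl _, rfl => hc n

def linkColoring {x y : ℕ → ℕ} (c : ℕ → Bool) (hc : ∀ n, c (x n) ≠ c (y n)) :
    (fromRel (linkRel x y)).Coloring Bool :=
  Coloring.mk (linkColor x c) fun {_ _} ⟨_, hlink⟩ =>
    hlink.elim (linkColor_ne_of_linkRel hc) fun h => (linkColor_ne_of_linkRel hc h).symm

theorem stmt_18_general (G : SimpleGraph ℕ)
    (hodd : ∀ (v : ℕ) (p : G.Walk v v), p.IsCycle → ¬ Odd p.length)
    (x y : ℕ → ℕ)
    (hwalk : ∀ n, ∃ p : G.Walk (x n) (y n), Odd p.length) :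
    ∀ (v : ℕ ⊕ ℕ × Bool) (p : (SimpleGraph.fromRel (linkRel x y)).Walk v v),
      p.IsCycle → ¬ Odd p.length := by
  intro v p _
  obtain ⟨c⟩ := nonempty_coloring_bool_of_forall_isCycle_not_odd hodd
  have hc : ∀ n, c (x n) ≠ c (y n) := fun n =>
    (hwalk n).elim fun q hq => c.ne_of_odd_length q hq
  exact Nat.not_odd_iff_even.2 (((linkColoring c hc).even_length_iff_congr p).2 Iff.rfl)

/-- Suppose G is a graph on ℕ with no odd cycle and (x_n, y_n) is an infinite
family of distinct pairs of distinct vertices, each joined by an odd-length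
walk in G.  Then the graph G' with fresh vertices a_n, b_n and edges
(x_n, a_n), (a_n, b_n), (b_n, y_n) has no odd cycle. -/
theorem stmt_18 (G : SimpleGraph ℕ)
    (hodd : ∀ (v : ℕ) (p : G.Walk v v), p.IsCycle → ¬ Odd p.length)
    (x y : ℕ → ℕ) (hxy : ∀ n, x n ≠ y n)
    (hinj : Function.Injective (fun n => (x n, y n)))
    (hwalk : ∀ n, ∃ p : G.Walk (x n) (y n), Odd p.length) :
    ∀ (v : ℕ ⊕ ℕ × Bool) (p : (SimpleGraph.fromRel (linkRel x y)).Walk v v),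
      p.IsCycle → ¬ Odd p.length :=
  stmt_18_general G hodd x y hwalk
end
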